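/- arXiv:2511.05128 — 3 statements merged into one kernel-verified Lean document; each statement's English description precedes it below -/
import Mathlib

section
/- Under randomization of Z and monotonicity Y₀ ≤ Y₁, for each z ∈ {0,1}: P(R_z = 1, Y₀ = 0, Y₁ = 0) = P(R = 1, Y = 0 | Z = z), where R is the observed recommendation and Y = Y_{R} the observed outcome. -/
open Finset
open scoped Classical

namespace PS

/-- Probability of an event `A` under weight function `p` on a finite sample space. -/
noncomputable def Prob {Ω : Type*} [Fintype Ω] (p : Ω → ℝ) (A : Ω → Prop) : ℝ :=
  ∑ ω ∈ Finset.univ.filter A, p ω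

/-- Conditional probability `P(A | B)`. -/
noncomputable def CProb {Ω : Type*} [Fintype Ω] (p : Ω → ℝ) (A B : Ω → Prop) : ℝ :=
  Prob p (fun ω => A ω ∧ B ω) / Prob p B

/-- Conditional expectation `E[f | B]`. -/
noncomputable def CExp {Ω : Type*} [Fintype Ω] (p : Ω → ℝ) (f : Ω → ℝ) (B : Ω → Prop) : ℝ :=
  (∑ ω ∈ Finset.univ.filter B, p ω * f ω) / Prob p B

/-- Indicator of a Boolean value, as a real number. -/
def ind (b : Bool) : ℝ := if b then 1 else 0

/-- Observed recommendation `R = R_Z`. -/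
def obsR {Ω : Type*} (Z R₀ R₁ : Ω → Bool) (ω : Ω) : Bool := if Z ω then R₁ ω else R₀ ω

/-- Observed outcome `Y = Y_R` (exclusion restriction). -/
def obsY {Ω : Type*} (Rv Y₀ Y₁ : Ω → Bool) (ω : Ω) : Bool := if Rv ω then Y₁ ω else Y₀ ω

/-- `Z` is independent of the vector `(R₀, R₁, Y₀, Y₁)`. -/
def IndepZ {Ω : Type*} [Fintype Ω] (p : Ω → ℝ) (Z R₀ R₁ Y₀ Y₁ : Ω → Bool) : Prop :=
  ∀ z a b c d : Bool,
    Prob p (fun ω => Z ω = z ∧ R₀ ω = a ∧ R₁ ω = b ∧ Y₀ ω = c ∧ Y₁ ω = d) =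
      Prob p (fun ω => Z ω = z) *
        Prob p (fun ω => R₀ ω = a ∧ R₁ ω = b ∧ Y₀ ω = c ∧ Y₁ ω = d)


lemma prob_congr {Ω : Type*} [Fintype Ω] (p : Ω → ℝ) {A B : Ω → Prop}
    (h : ∀ ω, A ω ↔ B ω) : Prob p A = Prob p B := by
  unfold Prob
  congr 1
  exact Finset.filter_congr (fun ω _ => h ω)

lemma prob_split {Ω : Type*} [Fintype Ω] (p : Ω → ℝ) (f : Ω → Bool) (Q : Ω → Prop) :
    Prob p Q = Prob p (fun ω => f ω = false ∧ Q ω) + Prob p (fun ω => f ω = true ∧ Q ω) := by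
  unfold Prob
  rw [← Finset.sum_filter_add_sum_filter_not (Finset.univ.filter Q) (fun ω => f ω = false)]
  rw [Finset.filter_filter, Finset.filter_filter]
  congr 1 <;> · apply Finset.sum_congr _ fun _ _ => rfl
                ext ω
                simp only [Finset.mem_filter]
                cases h : f ω <;> simp [h]

theorem stmt1 {Ω : Type*} [Fintype Ω] (p : Ω → ℝ) (Z R₀ R₁ Y₀ Y₁ : Ω → Bool)
    (hp : ∀ ω, 0 ≤ p ω) (hsum : ∑ ω, p ω = 1)
    (hZpos : ∀ z : Bool, 0 < Prob p (fun ω => Z ω = z))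
    (hindep : IndepZ p Z R₀ R₁ Y₀ Y₁)
    (hmono : ∀ ω, Y₀ ω = true → Y₁ ω = true) :
    ∀ z : Bool,
      Prob p (fun ω => (if z then R₁ ω else R₀ ω) = true ∧ Y₀ ω = false ∧ Y₁ ω = false) =
        CProb p (fun ω => obsR Z R₀ R₁ ω = true ∧ obsY (obsR Z R₀ R₁) Y₀ Y₁ ω = false) (fun ω => Z ω = z) := by

  intro z
  have hzne : Prob p (fun ω => Z ω = z) ≠ 0 := ne_of_gt (hZpos z)
  have key : Prob p (fun ω => (obsR Z R₀ R₁ ω = true ∧ obsY (obsR Z R₀ R₁) Y₀ Y₁ ω = false) ∧ Z ω = z)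
      = Prob p (fun ω => Z ω = z) *
        Prob p (fun ω => (if z then R₁ ω else R₀ ω) = true ∧ Y₀ ω = false ∧ Y₁ ω = false) := by
    have h1 : ∀ ω, ((obsR Z R₀ R₁ ω = true ∧ obsY (obsR Z R₀ R₁) Y₀ Y₁ ω = false) ∧ Z ω = z)
        ↔ (Z ω = z ∧ (if z then R₁ ω else R₀ ω) = true ∧ Y₀ ω = false ∧ Y₁ ω = false) := by
      intro ω
      have hm := hmono ω
      cases hz : Z ω <;> cases z <;>
        simp_all [obsR, obsY] <;>
        (intro hR hY <;> cases hY0 : Y₀ ω <;> simp_all)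
    rw [prob_congr p h1]
    cases z with
    | false =>
      rw [prob_split p R₁ (fun ω => Z ω = false ∧ (if false then R₁ ω else R₀ ω) = true ∧ Y₀ ω = false ∧ Y₁ ω = false),
          prob_split p R₁ (fun ω => (if false then R₁ ω else R₀ ω) = true ∧ Y₀ ω = false ∧ Y₁ ω = false)]
      have e1 := hindep false true false false false
      have e2 := hindep false true true false false
      rw [prob_congr p (A := fun ω => R₁ ω = false ∧ Z ω = false ∧ (if false then R₁ ω else R₀ ω) = true ∧ Y₀ ω = false ∧ Y₁ ω = false)
            (B := fun ω => Z ω = false ∧ R₀ ω = true ∧ R₁ ω = false ∧ Y₀ ω = false ∧ Y₁ ω = false) (by intro ω; simp; try tauto),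
          prob_congr p (A := fun ω => R₁ ω = true ∧ Z ω = false ∧ (if false then R₁ ω else R₀ ω) = true ∧ Y₀ ω = false ∧ Y₁ ω = false)
            (B := fun ω => Z ω = false ∧ R₀ ω = true ∧ R₁ ω = true ∧ Y₀ ω = false ∧ Y₁ ω = false) (by intro ω; simp; try tauto),
          prob_congr p (A := fun ω => R₁ ω = false ∧ (if false then R₁ ω else R₀ ω) = true ∧ Y₀ ω = false ∧ Y₁ ω = false)
            (B := fun ω => R₀ ω = true ∧ R₁ ω = false ∧ Y₀ ω = false ∧ Y₁ ω = false) (by intro ω; simp; try tauto),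
          prob_congr p (A := fun ω => R₁ ω = true ∧ (if false then R₁ ω else R₀ ω) = true ∧ Y₀ ω = false ∧ Y₁ ω = false)
            (B := fun ω => R₀ ω = true ∧ R₁ ω = true ∧ Y₀ ω = false ∧ Y₁ ω = false) (by intro ω; simp; try tauto)]
      rw [e1, e2]; ring
    | true =>
      rw [prob_split p R₀ (fun ω => Z ω = true ∧ (if true then R₁ ω else R₀ ω) = true ∧ Y₀ ω = false ∧ Y₁ ω = false),
          prob_split p R₀ (fun ω => (if true then R₁ ω else R₀ ω) = true ∧ Y₀ ω = false ∧ Y₁ ω = false)]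
      have e1 := hindep true false true false false
      have e2 := hindep true true true false false
      rw [prob_congr p (A := fun ω => R₀ ω = false ∧ Z ω = true ∧ (if true then R₁ ω else R₀ ω) = true ∧ Y₀ ω = false ∧ Y₁ ω = false)
            (B := fun ω => Z ω = true ∧ R₀ ω = false ∧ R₁ ω = true ∧ Y₀ ω = false ∧ Y₁ ω = false) (by intro ω; simp; try tauto),
          prob_congr p (A := fun ω => R₀ ω = true ∧ Z ω = true ∧ (if true then R₁ ω else R₀ ω) = true ∧ Y₀ ω = false ∧ Y₁ ω = false)
            (B := fun ω => Z ω = true ∧ R₀ ω = true ∧ R₁ ω = true ∧ Y₀ ω = false ∧ Y₁ ω = false) (by intro ω; simp; try tauto),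
          prob_congr p (A := fun ω => R₀ ω = false ∧ (if true then R₁ ω else R₀ ω) = true ∧ Y₀ ω = false ∧ Y₁ ω = false)
            (B := fun ω => R₀ ω = false ∧ R₁ ω = true ∧ Y₀ ω = false ∧ Y₁ ω = false) (by intro ω; simp; try tauto),
          prob_congr p (A := fun ω => R₀ ω = true ∧ (if true then R₁ ω else R₀ ω) = true ∧ Y₀ ω = false ∧ Y₁ ω = false)
            (B := fun ω => R₀ ω = true ∧ R₁ ω = true ∧ Y₀ ω = false ∧ Y₁ ω = false) (by intro ω; simp; try tauto)]
      rw [e1, e2]; ring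
  unfold CProb
  rw [key]
  field_simp


end PS
end

section
/- Under randomization of Z, exclusion restriction, and monotonicity Y₀ ≤ Y₁, if P(Y₁ = 1) > P(Y₀ = 1), then the average principal causal effect for the Helpable stratum, E[R₁ − R₀ | Y₀ = 0, Y₁ = 1], equals (E[Y | Z = 1] − E[Y | Z = 0]) / (P(Y₁ = 1) − P(Y₀ = 1)). -/
open Finset
open scoped Classical

namespace PS

/-!
Writing `Y = Y₀ + R (Y₁ - Y₀)`, randomization of `Z` turns `E[Y | Z = z]` into the
unconditional mean of `Y_{R_z}`, so the intention-to-treat effect is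
`E[(R₁ - R₀)(Y₁ - Y₀)]`. Under monotonicity `Y₁ - Y₀` is the indicator of the Helpable
stratum `H`, so this effect is `E[(R₁ - R₀); H]`, while `P(Y₁ = 1) - P(Y₀ = 1) = P(H)`;
the quotient is therefore `E[R₁ - R₀ | H]`.
-/

section Expectation

variable {Ω α : Type*} [Fintype Ω] [Fintype α] (p : Ω → ℝ)

theorem cExp_congr {f g : Ω → ℝ} {B : Ω → Prop} (hfg : ∀ ω, B ω → f ω = g ω) :
    CExp p f B = CExp p g B := by
  unfold CExp
  congr 1
  exact Finset.sum_congr rfl fun ω hω => by rw [hfg ω (Finset.mem_filter.1 hω).2]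

theorem prob_eq_sum_filter (A : Ω → Prop) [DecidablePred A] :
    Prob p A = ∑ ω ∈ Finset.univ.filter A, p ω := by
  rw [Prob]
  congr!

theorem cExp_eq_sum_filter_div (f : Ω → ℝ) (B : Ω → Prop) [DecidablePred B] :
    CExp p f B = (∑ ω ∈ Finset.univ.filter B, p ω * f ω) / Prob p B := by
  rw [CExp]
  congr!

theorem prob_eq_sum_mul_ind (Y : Ω → Bool) :
    Prob p (fun ω => Y ω = true) = ∑ ω, p ω * ind (Y ω) := by
  rw [Prob, Finset.sum_filter]
  exact Finset.sum_congr rfl fun ω _ => by cases Y ω <;> simp [ind]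

theorem sum_filter_mul_comp_eq_sum_prob (A : Ω → Prop) (V : Ω → α) (f : α → ℝ) :
    ∑ ω ∈ Finset.univ.filter A, p ω * f (V ω) =
      ∑ v, f v * Prob p (fun ω => A ω ∧ V ω = v) := by
  rw [← Finset.sum_fiberwise (Finset.univ.filter A) V]
  refine Finset.sum_congr rfl fun v _ => ?_
  rw [prob_eq_sum_filter, Finset.mul_sum, Finset.filter_filter]
  exact Finset.sum_congr rfl fun ω hω => by rw [(Finset.mem_filter.1 hω).2.2, mul_comm]

theorem sum_filter_mul_comp_eq_prob_mul_sum {A : Ω → Prop} {V : Ω → α}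
    (hAV : ∀ v, Prob p (fun ω => A ω ∧ V ω = v) = Prob p A * Prob p (fun ω => V ω = v))
    (f : α → ℝ) :
    ∑ ω ∈ Finset.univ.filter A, p ω * f (V ω) = Prob p A * ∑ ω, p ω * f (V ω) := by
  have hunfiltered := sum_filter_mul_comp_eq_sum_prob p (fun _ => True) V f
  simp only [Finset.filter_true, true_and] at hunfiltered
  rw [sum_filter_mul_comp_eq_sum_prob, hunfiltered, Finset.mul_sum]
  exact Finset.sum_congr rfl fun v _ => by rw [hAV]; ring

theorem cExp_comp_eq_sum_of_indep {A : Ω → Prop} {V : Ω → α}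
    (hAV : ∀ v, Prob p (fun ω => A ω ∧ V ω = v) = Prob p A * Prob p (fun ω => V ω = v))
    (hA : Prob p A ≠ 0) (f : α → ℝ) :
    CExp p (fun ω => f (V ω)) A = ∑ ω, p ω * f (V ω) := by
  rw [CExp, sum_filter_mul_comp_eq_prob_mul_sum p hAV, mul_div_cancel_left₀ _ hA]

end Expectation

section Potential

variable {Ω : Type*} [Fintype Ω] {p : Ω → ℝ} {Z R₀ R₁ Y₀ Y₁ : Ω → Bool}

theorem IndepZ.prob_and_eq_mul (h : IndepZ p Z R₀ R₁ Y₀ Y₁) (z : Bool)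
    (v : Bool × Bool × Bool × Bool) :
    Prob p (fun ω => Z ω = z ∧ (R₀ ω, R₁ ω, Y₀ ω, Y₁ ω) = v) =
      Prob p (fun ω => Z ω = z) * Prob p (fun ω => (R₀ ω, R₁ ω, Y₀ ω, Y₁ ω) = v) := by
  obtain ⟨a, b, c, d⟩ := v
  simpa only [Prod.mk.injEq] using h z a b c d

theorem ind_ite_sub_ind_ite (r₀ r₁ y₀ y₁ : Bool) :
    ind (if r₁ then y₁ else y₀) - ind (if r₀ then y₁ else y₀) =
      (ind r₁ - ind r₀) * (ind y₁ - ind y₀) := by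
  cases r₀ <;> cases r₁ <;> simp [ind]

theorem sum_filter_helpable_eq (hmono : ∀ ω, Y₀ ω = true → Y₁ ω = true) (g : Ω → ℝ) :
    ∑ ω ∈ Finset.univ.filter (fun ω => Y₀ ω = false ∧ Y₁ ω = true), p ω * g ω =
      ∑ ω, p ω * g ω * (ind (Y₁ ω) - ind (Y₀ ω)) := by
  rw [Finset.sum_filter]
  refine Finset.sum_congr rfl fun ω _ => ?_
  have := hmono ω
  cases h₀ : Y₀ ω <;> cases h₁ : Y₁ ω <;> simp_all [ind]

theorem prob_sub_prob_eq_prob_helpable (hmono : ∀ ω, Y₀ ω = true → Y₁ ω = true) :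
    Prob p (fun ω => Y₁ ω = true) - Prob p (fun ω => Y₀ ω = true) =
      Prob p (fun ω => Y₀ ω = false ∧ Y₁ ω = true) := by
  have hhelp := sum_filter_helpable_eq (p := p) hmono (fun _ => 1)
  simp only [mul_one] at hhelp
  rw [prob_eq_sum_mul_ind, prob_eq_sum_mul_ind, prob_eq_sum_filter, hhelp,
    ← Finset.sum_sub_distrib]
  simp only [mul_sub]

theorem cExp_obsY_eq_sum (hindep : IndepZ p Z R₀ R₁ Y₀ Y₁)
    {z : Bool} (hz : Prob p (fun ω => Z ω = z) ≠ 0) :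
    CExp p (fun ω => ind (obsY (obsR Z R₀ R₁) Y₀ Y₁ ω)) (fun ω => Z ω = z) =
      ∑ ω, p ω * ind (if (if z then R₁ ω else R₀ ω) then Y₁ ω else Y₀ ω) := by
  rw [cExp_congr p (g := fun ω => ind (if (if z then R₁ ω else R₀ ω) then Y₁ ω else Y₀ ω))
    fun ω hω => by rw [obsY, obsR, hω]]
  exact cExp_comp_eq_sum_of_indep p (V := fun ω => (R₀ ω, R₁ ω, Y₀ ω, Y₁ ω))
    (hindep.prob_and_eq_mul z) hz
    (fun v => ind (if (if z then v.2.1 else v.1) then v.2.2.2 else v.2.2.1))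

end Potential

theorem stmt4_general {Ω : Type*} [Fintype Ω] (p : Ω → ℝ) (Z R₀ R₁ Y₀ Y₁ : Ω → Bool)
    (hZpos : ∀ z : Bool, 0 < Prob p (fun ω => Z ω = z))
    (hindep : IndepZ p Z R₀ R₁ Y₀ Y₁)
    (hmono : ∀ ω, Y₀ ω = true → Y₁ ω = true) :
    CExp p (fun ω => ind (R₁ ω) - ind (R₀ ω)) (fun ω => Y₀ ω = false ∧ Y₁ ω = true) =
      (CExp p (fun ω => ind (obsY (obsR Z R₀ R₁) Y₀ Y₁ ω)) (fun ω => Z ω = true) - CExp p (fun ω => ind (obsY (obsR Z R₀ R₁) Y₀ Y₁ ω)) (fun ω => Z ω = false)) /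
        (Prob p (fun ω => Y₁ ω = true) - Prob p (fun ω => Y₀ ω = true)) := by
  have hnum : (∑ ω, p ω * ind (if R₁ ω then Y₁ ω else Y₀ ω)) -
      ∑ ω, p ω * ind (if R₀ ω then Y₁ ω else Y₀ ω) =
      ∑ ω ∈ Finset.univ.filter (fun ω => Y₀ ω = false ∧ Y₁ ω = true),
        p ω * (ind (R₁ ω) - ind (R₀ ω)) := by
    rw [sum_filter_helpable_eq hmono, ← Finset.sum_sub_distrib]
    exact Finset.sum_congr rfl fun ω _ => by rw [← mul_sub, ind_ite_sub_ind_ite, mul_assoc]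
  rw [cExp_eq_sum_filter_div, cExp_obsY_eq_sum hindep (hZpos true).ne',
    cExp_obsY_eq_sum hindep (hZpos false).ne']
  simp only [if_true, Bool.false_eq_true, if_false]
  rw [hnum, prob_sub_prob_eq_prob_helpable hmono]

theorem stmt4 {Ω : Type*} [Fintype Ω] (p : Ω → ℝ) (Z R₀ R₁ Y₀ Y₁ : Ω → Bool)
    (hp : ∀ ω, 0 ≤ p ω) (hsum : ∑ ω, p ω = 1)
    (hZpos : ∀ z : Bool, 0 < Prob p (fun ω => Z ω = z))
    (hindep : IndepZ p Z R₀ R₁ Y₀ Y₁)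
    (hmono : ∀ ω, Y₀ ω = true → Y₁ ω = true)
    (hH : 0 < Prob p (fun ω => Y₀ ω = false ∧ Y₁ ω = true))
    (hgap : Prob p (fun ω => Y₀ ω = true) < Prob p (fun ω => Y₁ ω = true)) :
    CExp p (fun ω => ind (R₁ ω) - ind (R₀ ω)) (fun ω => Y₀ ω = false ∧ Y₁ ω = true) =
      (CExp p (fun ω => ind (obsY (obsR Z R₀ R₁) Y₀ Y₁ ω)) (fun ω => Z ω = true) - CExp p (fun ω => ind (obsY (obsR Z R₀ R₁) Y₀ Y₁ ω)) (fun ω => Z ω = false)) /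
        (Prob p (fun ω => Y₁ ω = true) - Prob p (fun ω => Y₀ ω = true)) :=
  stmt4_general p Z R₀ R₁ Y₀ Y₁ hZpos hindep hmono

end PS
end

section
/- Under randomization of Z, exclusion restriction, and monotonicity Y₀ ≤ Y₁, if P(Y₁ = 1) < 1, then the average principal causal effect for the Always-Low stratum, E[R₁ − R₀ | Y₀ = 0, Y₁ = 0], equals (P(R = 1, Y = 0 | Z = 1) − P(R = 1, Y = 0 | Z = 0)) / (1 − P(Y₁ = 1)). -/
open Finset
open scoped Classical

namespace PS

section Aux
variable {Ω : Type*} [Fintype Ω]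

lemma Prob_eq_sum (p : Ω → ℝ) (A : Ω → Prop) :
    Prob p A = ∑ ω, if A ω then p ω else 0 := by
  rw [Prob, Finset.sum_filter]

lemma Prob_congr (p : Ω → ℝ) {A B : Ω → Prop} (h : ∀ ω, A ω ↔ B ω) :
    Prob p A = Prob p B := by
  rw [Prob_eq_sum, Prob_eq_sum]
  exact Finset.sum_congr rfl fun ω _ => by rw [if_congr (h ω) rfl rfl]

lemma Prob_false (p : Ω → ℝ) : Prob p (fun _ => False) = 0 := by
  rw [Prob_eq_sum]; simp

lemma Prob_sum4 (p : Ω → ℝ) (C : Ω → Prop) (R₀ R₁ Y₀ Y₁ : Ω → Bool)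
    (φ : Bool → Bool → Bool → Bool → Bool) :
    Prob p (fun ω => C ω ∧ φ (R₀ ω) (R₁ ω) (Y₀ ω) (Y₁ ω) = true) =
      ∑ t : Bool × Bool × Bool × Bool,
        if φ t.1 t.2.1 t.2.2.1 t.2.2.2 = true then
          Prob p (fun ω => C ω ∧ R₀ ω = t.1 ∧ R₁ ω = t.2.1 ∧ Y₀ ω = t.2.2.1 ∧ Y₁ ω = t.2.2.2)
        else 0 := by
  have e : ∀ t : Bool × Bool × Bool × Bool,
      (if φ t.1 t.2.1 t.2.2.1 t.2.2.2 = true then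
          Prob p (fun ω => C ω ∧ R₀ ω = t.1 ∧ R₁ ω = t.2.1 ∧ Y₀ ω = t.2.2.1 ∧ Y₁ ω = t.2.2.2)
        else 0)
      = Prob p (fun ω => φ t.1 t.2.1 t.2.2.1 t.2.2.2 = true ∧ C ω ∧ R₀ ω = t.1 ∧
          R₁ ω = t.2.1 ∧ Y₀ ω = t.2.2.1 ∧ Y₁ ω = t.2.2.2) := by
    intro t
    by_cases h : φ t.1 t.2.1 t.2.2.1 t.2.2.2 = true
    · rw [if_pos h]
      exact Prob_congr p fun ω => by simp [h]
    · rw [if_neg h]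
      have : Prob p (fun ω => φ t.1 t.2.1 t.2.2.1 t.2.2.2 = true ∧ C ω ∧ R₀ ω = t.1 ∧
          R₁ ω = t.2.1 ∧ Y₀ ω = t.2.2.1 ∧ Y₁ ω = t.2.2.2) = Prob p (fun _ => False) :=
        Prob_congr p fun ω => by simp [h]
      rw [this, Prob_false]
  rw [Finset.sum_congr rfl fun t (_ : t ∈ (Finset.univ : Finset (Bool × Bool × Bool × Bool))) => e t]
  simp only [Prob_eq_sum]
  rw [Finset.sum_comm]
  refine Finset.sum_congr rfl fun ω _ => ?_
  by_cases hC : C ω <;>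
    cases h0 : R₀ ω <;> cases h1 : R₁ ω <;> cases h2 : Y₀ ω <;> cases h3 : Y₁ ω <;>
      simp [Fintype.sum_prod_type, h0, h1, h2, h3, hC]

lemma key (p : Ω → ℝ) (Z R₀ R₁ Y₀ Y₁ : Ω → Bool) (hindep : IndepZ p Z R₀ R₁ Y₀ Y₁)
    (φ : Bool → Bool → Bool → Bool → Bool) (z : Bool) :
    Prob p (fun ω => Z ω = z ∧ φ (R₀ ω) (R₁ ω) (Y₀ ω) (Y₁ ω) = true) =
      Prob p (fun ω => Z ω = z) * Prob p (fun ω => φ (R₀ ω) (R₁ ω) (Y₀ ω) (Y₁ ω) = true) := by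
  have hRtriv : Prob p (fun ω => φ (R₀ ω) (R₁ ω) (Y₀ ω) (Y₁ ω) = true)
      = Prob p (fun ω => True ∧ φ (R₀ ω) (R₁ ω) (Y₀ ω) (Y₁ ω) = true) :=
    Prob_congr p fun ω => by simp
  rw [hRtriv, Prob_sum4 p (fun ω => Z ω = z) R₀ R₁ Y₀ Y₁ φ,
    Prob_sum4 p (fun _ => True) R₀ R₁ Y₀ Y₁ φ, Finset.mul_sum]
  refine Finset.sum_congr rfl fun t _ => ?_
  by_cases h : φ t.1 t.2.1 t.2.2.1 t.2.2.2 = true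
  · rw [if_pos h, if_pos h, hindep z t.1 t.2.1 t.2.2.1 t.2.2.2]
    congr 1
    exact Prob_congr p fun ω => by simp
  · rw [if_neg h, if_neg h, mul_zero]

end Aux

theorem stmt5 {Ω : Type*} [Fintype Ω] (p : Ω → ℝ) (Z R₀ R₁ Y₀ Y₁ : Ω → Bool)
    (hp : ∀ ω, 0 ≤ p ω) (hsum : ∑ ω, p ω = 1)
    (hZpos : ∀ z : Bool, 0 < Prob p (fun ω => Z ω = z))
    (hindep : IndepZ p Z R₀ R₁ Y₀ Y₁)
    (hmono : ∀ ω, Y₀ ω = true → Y₁ ω = true)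
    (hAL : 0 < Prob p (fun ω => Y₁ ω = false))
    (hlt : Prob p (fun ω => Y₁ ω = true) < 1) :
    CExp p (fun ω => ind (R₁ ω) - ind (R₀ ω)) (fun ω => Y₀ ω = false ∧ Y₁ ω = false) =
      (CProb p (fun ω => obsR Z R₀ R₁ ω = true ∧ obsY (obsR Z R₀ R₁) Y₀ Y₁ ω = false) (fun ω => Z ω = true) -
        CProb p (fun ω => obsR Z R₀ R₁ ω = true ∧ obsY (obsR Z R₀ R₁) Y₀ Y₁ ω = false) (fun ω => Z ω = false)) /
        (1 - Prob p (fun ω => Y₁ ω = true)) := by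
  classical
  have hden : Prob p (fun ω => Y₁ ω = false) = 1 - Prob p (fun ω => Y₁ ω = true) := by
    have h : Prob p (fun ω => Y₁ ω = true) + Prob p (fun ω => Y₁ ω = false) = 1 := by
      rw [Prob_eq_sum, Prob_eq_sum, ← Finset.sum_add_distrib, ← hsum]
      exact Finset.sum_congr rfl fun ω _ => by cases h : Y₁ ω <;> simp [h]
    linarith
  have hB : ∀ ω, (Y₀ ω = false ∧ Y₁ ω = false) ↔ Y₁ ω = false := by
    intro ω
    constructor
    · rintro ⟨_, h⟩; exact h
    · intro h
      refine ⟨?_, h⟩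
      cases h0 : Y₀ ω
      · rfl
      · rw [hmono ω h0] at h; cases h
  have h1 : CProb p (fun ω => obsR Z R₀ R₁ ω = true ∧ obsY (obsR Z R₀ R₁) Y₀ Y₁ ω = false)
      (fun ω => Z ω = true) = Prob p (fun ω => R₁ ω = true ∧ Y₁ ω = false) := by
    rw [CProb]
    have e1 : Prob p (fun ω => (obsR Z R₀ R₁ ω = true ∧ obsY (obsR Z R₀ R₁) Y₀ Y₁ ω = false) ∧ Z ω = true)
        = Prob p (fun ω => Z ω = true ∧ (R₁ ω && !Y₁ ω) = true) :=
      Prob_congr p fun ω => by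
        cases hZ : Z ω <;> cases hR : R₁ ω <;> cases hY : Y₁ ω <;>
          simp [obsR, obsY, hZ, hR, hY]
    rw [e1, key p Z R₀ R₁ Y₀ Y₁ hindep (fun a b c d => b && !d) true,
      mul_comm, mul_div_assoc, div_self (ne_of_gt (hZpos true)), mul_one]
    exact Prob_congr p fun ω => by cases hR : R₁ ω <;> cases hY : Y₁ ω <;> simp [hR, hY]
  have h0 : CProb p (fun ω => obsR Z R₀ R₁ ω = true ∧ obsY (obsR Z R₀ R₁) Y₀ Y₁ ω = false)
      (fun ω => Z ω = false) = Prob p (fun ω => R₀ ω = true ∧ Y₁ ω = false) := by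
    rw [CProb]
    have e1 : Prob p (fun ω => (obsR Z R₀ R₁ ω = true ∧ obsY (obsR Z R₀ R₁) Y₀ Y₁ ω = false) ∧ Z ω = false)
        = Prob p (fun ω => Z ω = false ∧ (R₀ ω && !Y₁ ω) = true) :=
      Prob_congr p fun ω => by
        cases hZ : Z ω <;> cases hR : R₀ ω <;> cases hY : Y₁ ω <;>
          simp [obsR, obsY, hZ, hR, hY]
    rw [e1, key p Z R₀ R₁ Y₀ Y₁ hindep (fun a b c d => a && !d) false,
      mul_comm, mul_div_assoc, div_self (ne_of_gt (hZpos false)), mul_one]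
    exact Prob_congr p fun ω => by cases hR : R₀ ω <;> cases hY : Y₁ ω <;> simp [hR, hY]
  rw [h1, h0, CExp]
  have hProbB : Prob p (fun ω => Y₀ ω = false ∧ Y₁ ω = false) = Prob p (fun ω => Y₁ ω = false) :=
    Prob_congr p hB
  rw [hProbB, hden]
  congr 1
  rw [Prob_eq_sum, Prob_eq_sum, ← Finset.sum_sub_distrib, Finset.sum_filter]
  refine Finset.sum_congr rfl fun ω _ => ?_
  cases h2 : Y₀ ω
  · cases hY : Y₁ ω <;> cases hR1 : R₁ ω <;> cases hR0 : R₀ ω <;>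
      simp [ind, h2, hY, hR1, hR0]
  · simp [ind, h2, hmono ω h2]


end PS
end
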